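/- arXiv:2512.15471 — 2 statements merged into one kernel-verified Lean document; each statement's English description precedes it below -/
import Mathlib

section
/- The optimal value of the RM_14 LP (maximize the minimum interval length) on a chain of k jobs with total processing time P and first release s_1 equals (d - s_1 - P)/k when d ≥ s_1 + P. -/
/-!
Summing the chain constraints telescopes: `∑ₜ (lₜ - eₜ) + P ≤ l_k + p_k - e₁ ≤ d - s₁`, so
`k` times the smallest window `lₜ - eₜ` is at most `d - s₁ - P`. Conversely, giving every job the
window `g = (d - s₁ - P) / k` and packing the blocks `[eₜ, lₜ + pₜ]` of length `g + pₜ` back to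
back from `s₁` ends exactly at `d`.
-/

open Finset

theorem Fin.partialSum_last {M : Type*} [AddCommMonoid M] {n : ℕ} (f : Fin n → M) :
    Fin.partialSum f (Fin.last n) = ∑ i, f i := by
  rw [Fin.partialSum, List.take_of_length_le (by simp), List.sum_ofFn]

theorem sum_sub_add_sum_le_of_chain {m : ℕ} (e l p : Fin (m + 1) → ℝ)
    (hchain : ∀ i : Fin m, l i.castSucc + p i.castSucc ≤ e i.succ) :
    ∑ i, (l i - e i) + ∑ i, p i ≤ l (Fin.last m) + p (Fin.last m) - e 0 := by
  induction m with
  | zero => simp [sub_add_eq_add_sub]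
  | succ m ih =>
    have hinit := ih (e ∘ Fin.castSucc) (l ∘ Fin.castSucc) (p ∘ Fin.castSucc)
      fun i => by simpa only [Function.comp_apply, Fin.succ_castSucc] using hchain i.castSucc
    simp only [Function.comp_apply, Fin.castSucc_zero] at hinit
    rw [Fin.sum_univ_castSucc, Fin.sum_univ_castSucc (fun i => p i)]
    linarith [Fin.succ_last m ▸ hchain (Fin.last m)]

noncomputable def uniformWindowStart {n : ℕ} (p : Fin n → ℝ) (s g : ℝ) (t : Fin n) : ℝ :=
  s + Fin.partialSum (fun u => p u + g) t.castSucc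

theorem uniformWindowStart_add_add {n : ℕ} (p : Fin n → ℝ) (s g : ℝ) (t : Fin n) :
    uniformWindowStart p s g t + g + p t = s + Fin.partialSum (fun u => p u + g) t.succ := by
  rw [uniformWindowStart, Fin.partialSum_succ]
  ring

theorem uniformWindowStart_zero {n : ℕ} (p : Fin (n + 1) → ℝ) (s g : ℝ) :
    uniformWindowStart p s g 0 = s := by
  simp [uniformWindowStart]

theorem uniformWindowStart_succ {n : ℕ} (p : Fin (n + 1) → ℝ) (s g : ℝ) (t : Fin n) :
    uniformWindowStart p s g t.succ = uniformWindowStart p s g t.castSucc + g + p t.castSucc := by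
  rw [uniformWindowStart_add_add, Fin.succ_castSucc]
  rfl

theorem uniformWindowStart_last_add_add {n : ℕ} (p : Fin (n + 1) → ℝ) (s g : ℝ) :
    uniformWindowStart p s g (Fin.last n) + g + p (Fin.last n) = s + ∑ t, p t + (n + 1) * g := by
  rw [uniformWindowStart_add_add, Fin.succ_last, Fin.partialSum_last, sum_add_distrib]
  simp only [sum_const, card_univ, Fintype.card_fin, nsmul_eq_mul]
  push_cast
  ring

theorem rm14_chain_optimal_value_general (k : ℕ) (hk : 0 < k)
    (p : Fin k → ℝ)
    (d s1 : ℝ) (hd : s1 + ∑ t, p t ≤ d) :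
    IsGreatest {v : ℝ | ∃ e l : Fin k → ℝ,
      s1 ≤ e ⟨0, hk⟩ ∧ (∀ t, e t ≤ l t) ∧
      (∀ t : Fin k, ∀ h : (t : ℕ) + 1 < k, l t + p t ≤ e ⟨(t : ℕ) + 1, h⟩) ∧
      l ⟨k - 1, Nat.sub_lt hk Nat.one_pos⟩ + p ⟨k - 1, Nat.sub_lt hk Nat.one_pos⟩ ≤ d ∧
      (∀ t, v ≤ l t - e t)}
      ((d - s1 - ∑ t, p t) / k) := by
  obtain ⟨m, rfl⟩ : ∃ m, k = m + 1 := ⟨k - 1, by omega⟩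
  have hm : (0 : ℝ) < (m + 1 : ℕ) := by positivity
  set g := (d - s1 - ∑ t, p t) / (m + 1 : ℕ)
  have hg : 0 ≤ g := div_nonneg (by linarith) hm.le
  have hkg : ((m : ℝ) + 1) * g = d - s1 - ∑ t, p t := by
    rw [← Nat.cast_add_one, mul_div_cancel₀ _ hm.ne']
  refine ⟨⟨uniformWindowStart p s1 g, fun t => uniformWindowStart p s1 g t + g,
    (uniformWindowStart_zero p s1 g).ge, fun t => le_add_of_nonneg_right hg,
    fun t ht => (uniformWindowStart_succ p s1 g ⟨t, by omega⟩).ge, ?_,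
    fun t => (add_sub_cancel_left _ _).ge⟩, ?_⟩
  · show uniformWindowStart p s1 g (Fin.last m) + g + p (Fin.last m) ≤ d
    linarith [uniformWindowStart_last_add_add p s1 g]
  · rintro v ⟨e, l, he0, -, hchain, hlast, hv⟩
    have htelescope := sum_sub_add_sum_le_of_chain e l p fun i => hchain i.castSucc i.succ.isLt
    have hmin : (m + 1 : ℕ) • v ≤ ∑ t, (l t - e t) := by
      simpa using card_nsmul_le_sum univ (fun t => l t - e t) v fun t _ => hv t
    have hlast' : l (Fin.last m) + p (Fin.last m) ≤ d := hlast
    have he0' : s1 ≤ e 0 := he0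
    rw [nsmul_eq_mul] at hmin
    rw [le_div_iff₀ hm, mul_comm]
    linarith

/-- The optimal value of the `RM₁₄` LP (maximize the minimum interval length) on a
chain of `k` jobs with total processing time `P` and first release `s₁` equals
`(d - s₁ - P) / k` when `d ≥ s₁ + P`. -/
theorem rm14_chain_optimal_value (k : ℕ) (hk : 0 < k)
    (p : Fin k → ℝ) (hp : ∀ t, 0 ≤ p t)
    (d s1 : ℝ) (hd : s1 + ∑ t, p t ≤ d) :
    IsGreatest {v : ℝ | ∃ e l : Fin k → ℝ,
      s1 ≤ e ⟨0, hk⟩ ∧ (∀ t, e t ≤ l t) ∧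
      (∀ t : Fin k, ∀ h : (t : ℕ) + 1 < k, l t + p t ≤ e ⟨(t : ℕ) + 1, h⟩) ∧
      l ⟨k - 1, Nat.sub_lt hk Nat.one_pos⟩ + p ⟨k - 1, Nat.sub_lt hk Nat.one_pos⟩ ≤ d ∧
      (∀ t, v ≤ l t - e t)}
      ((d - s1 - ∑ t, p t) / k) :=
  rm14_chain_optimal_value_general k hk p d s1 hd
end

section
/- If every job's processing-time excess over plan is absorbed by its free slack in every realization — i.e., D_j ≤ p_j + fs_j surely for all j where fs_j = min over direct successors i of (s_i - s_j - p_j) — then every job starts exactly at its planned time: X_j = s_j surely for all jobs j. -/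
open Finset

/-!
Induct along the DAG from the sources. A job `i` that starts on time finishes at
`s i + D i ≤ s i + p i + fs i ≤ s j` for every direct successor `j`, since `fs i` is the
minimum of `s j - s i - p i` over those successors. So once all predecessors of `j` have
started on time, the maximum defining `X j` is attained by `s j`.
-/

/-- On a finite type both statements amount to acyclicity of `r`. -/
theorem WellFounded.swap_of_finite {α : Type*} [Finite α] {r : α → α → Prop}
    (h : WellFounded r) : WellFounded (Function.swap r) := by
  have : Std.Irrefl (Relation.TransGen (Function.swap r)) :=
    ⟨fun a ha => h.transGen.irrefl.irrefl a (Relation.transGen_swap.1 ha)⟩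
  exact (Finite.wellFounded_of_trans_of_irrefl _).mono fun _ _ => Relation.TransGen.single

section

variable {J : Type*} [Fintype J] {succ : J → J → Prop} [DecidableRel succ] {s p fs : J → ℝ}

theorem add_le_start_of_succ_of_le_free_slack
    (hfs : ∀ j (h : (univ.filter (fun i => succ j i)).Nonempty),
      fs j = (univ.filter (fun i => succ j i)).inf' h (fun i => s i - s j - p j))
    {i j : J} (hij : succ i j) {d : ℝ} (hd : d ≤ p i + fs i) : s i + d ≤ s j := by
  have hmem : j ∈ univ.filter (fun k => succ i k) := mem_filter.2 ⟨mem_univ _, hij⟩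
  have hslack : fs i ≤ s j - s i - p i := by
    rw [hfs i ⟨j, hmem⟩]
    exact inf'_le _ hmem
  linarith

theorem start_eq_of_forall_pred_finish_le {X Y : J → ℝ}
    (hX_src : ∀ j, univ.filter (fun i => succ i j) = ∅ → X j = s j)
    (hX_rec : ∀ j (h : (univ.filter (fun i => succ i j)).Nonempty),
      X j = max (s j) ((univ.filter (fun i => succ i j)).sup' h Y))
    (j : J) (hpred : ∀ i, succ i j → Y i ≤ s j) : X j = s j := by
  rcases (univ.filter (fun i => succ i j)).eq_empty_or_nonempty with hsrc | hne
  · exact hX_src j hsrc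
  · rw [hX_rec j hne, max_eq_left (sup'_le _ _ fun i hi => hpred i (mem_filter.1 hi).2)]

theorem start_eq_of_slack_absorbs {D X Y : J → ℝ}
    (hwf : WellFounded (fun i j => succ j i))
    (hfs : ∀ j (h : (univ.filter (fun i => succ j i)).Nonempty),
      fs j = (univ.filter (fun i => succ j i)).inf' h (fun i => s i - s j - p j))
    (hD_abs : ∀ j, (univ.filter (fun i => succ j i)).Nonempty → D j ≤ p j + fs j)
    (hX_src : ∀ j, univ.filter (fun i => succ i j) = ∅ → X j = s j)
    (hX_rec : ∀ j (h : (univ.filter (fun i => succ i j)).Nonempty),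
      X j = max (s j) ((univ.filter (fun i => succ i j)).sup' h Y))
    (hY : ∀ j, Y j = X j + D j) (j : J) : X j = s j := by
  induction j using hwf.swap_of_finite.induction with
  | _ j ih =>
    refine start_eq_of_forall_pred_finish_le hX_src hX_rec j fun i hij => ?_
    have hD : D i ≤ p i + fs i := hD_abs i ⟨j, mem_filter.2 ⟨mem_univ _, hij⟩⟩
    rw [hY, ih i hij]
    exact add_le_start_of_succ_of_le_free_slack hfs hij hD

end

theorem start_on_time_of_slack_absorbs_general {J : Type} [Fintype J]
    (succ : J → J → Prop) [DecidableRel succ]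
    {Ω : Type}
    (s p fs : J → ℝ) (D X Y : J → Ω → ℝ)
    (hwf : WellFounded (fun i j => succ j i))
    (hfs : ∀ j (h : (univ.filter (fun i => succ j i)).Nonempty),
      fs j = (univ.filter (fun i => succ j i)).inf' h (fun i => s i - s j - p j))
    (hD_abs : ∀ j, (univ.filter (fun i => succ j i)).Nonempty → ∀ ω, D j ω ≤ p j + fs j)
    (hX_src : ∀ j, (univ.filter (fun i => succ i j)) = ∅ → ∀ ω, X j ω = s j)
    (hX_rec : ∀ j (h : (univ.filter (fun i => succ i j)).Nonempty), ∀ ω,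
      X j ω = max (s j) ((univ.filter (fun i => succ i j)).sup' h (fun i => Y i ω)))
    (hY : ∀ j ω, Y j ω = X j ω + D j ω) :
    ∀ j, ∀ ω, X j ω = s j := fun j ω =>
  start_eq_of_slack_absorbs (D := (D · ω)) (X := (X · ω)) (Y := (Y · ω)) hwf hfs
    (fun j hj => hD_abs j hj ω) (fun j hj => hX_src j hj ω) (fun j hj => hX_rec j hj ω)
    (fun j => hY j ω) j

/-- If every job's processing-time excess over plan is absorbed by its free slack in
every realization — `D j ≤ p j + fs j` surely for every non-sink job `j` — then every
job starts exactly at its planned time: `X j = s j` surely. -/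
theorem start_on_time_of_slack_absorbs {J : Type} [Fintype J]
    (succ : J → J → Prop) [DecidableRel succ]
    {Ω : Type}
    (s p fs : J → ℝ) (D X Y : J → Ω → ℝ)
    (hp : ∀ j, 0 ≤ p j) (hD : ∀ j ω, 0 ≤ D j ω)
    (hwf : WellFounded (fun i j => succ j i))
    (hfeas : ∀ j i, succ j i → s j + p j ≤ s i)
    (hfs : ∀ j (h : (univ.filter (fun i => succ j i)).Nonempty),
      fs j = (univ.filter (fun i => succ j i)).inf' h (fun i => s i - s j - p j))
    (hD_abs : ∀ j, (univ.filter (fun i => succ j i)).Nonempty → ∀ ω, D j ω ≤ p j + fs j)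
    (hX_src : ∀ j, (univ.filter (fun i => succ i j)) = ∅ → ∀ ω, X j ω = s j)
    (hX_rec : ∀ j (h : (univ.filter (fun i => succ i j)).Nonempty), ∀ ω,
      X j ω = max (s j) ((univ.filter (fun i => succ i j)).sup' h (fun i => Y i ω)))
    (hY : ∀ j ω, Y j ω = X j ω + D j ω) :
    ∀ j, ∀ ω, X j ω = s j :=
  start_on_time_of_slack_absorbs_general succ s p fs D X Y hwf hfs hD_abs hX_src hX_rec hY
end
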